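/- arXiv:0909.0710 — 3 statements merged into one kernel-verified Lean document; each statement's English description precedes it below -/
import Mathlib

section
/- For every positive integer N, the product over n = 1 to N of tan(nπ/(2N+1)) equals √(2N+1). -/
/-!
If `ζ = exp (2πij/m)` with `j` prime to `m`, then `ζ` is a primitive `m`-th root of unity, so
`∏_{k=1}^{m-1} (1 - ζ^k) = m`; since `‖1 - ζ^k‖ = 2 |sin (jkπ/m)|`, this gives
`∏_{k=1}^{m-1} 2 |sin (jkπ/m)| = m`. For odd `m = 2N+1`, dividing the case `j = 2` by the case
`j = 1` through `sin 2x = 2 sin x cos x` gives `∏_{k=1}^{m-1} 2 |cos (kπ/m)| = 1`. Both products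
are invariant under `k ↦ m - k`, so the positive factors with `1 ≤ k ≤ N` multiply to `√m` and `1`,
and the tangent product is their quotient.
-/

open Finset Real

lemma Finset.prod_Icc_one_eq_prod_range {M : Type*} [CommMonoid M] (f : ℕ → M) (n : ℕ) :
    ∏ k ∈ Icc 1 n, f k = ∏ k ∈ range n, f (k + 1) := by
  rw [← Ico_add_one_right_eq_Icc, prod_Ico_eq_prod_range, Nat.add_sub_cancel]
  simp only [add_comm]

lemma Finset.prod_Icc_two_mul_eq_sq_of_symm {M : Type*} [CommMonoid M] (f : ℕ → M) (N : ℕ)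
    (hf : ∀ k ∈ Icc 1 N, f (2 * N + 1 - k) = f k) :
    ∏ k ∈ Icc 1 (2 * N), f k = (∏ k ∈ Icc 1 N, f k) ^ 2 := by
  have hreflect : ∏ k ∈ Icc 1 N, f (2 * N + 1 - k) = ∏ k ∈ Ioc N (2 * N), f k := by
    rw [← Ico_add_one_right_eq_Icc, prod_Ico_reflect f 1 (by omega)]
    congr 1
    ext k; simp only [mem_Ico, mem_Ioc]; omega
  change ∏ k ∈ Ioc 0 (2 * N), f k = (∏ k ∈ Ioc 0 N, f k) ^ 2
  rw [← prod_Ioc_consecutive f N.zero_le (by omega : N ≤ 2 * N), ← hreflect, prod_congr rfl hf, sq]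
  rfl

lemma Complex.norm_one_sub_exp_two_mul_I (x : ℝ) :
    ‖1 - Complex.exp (2 * x * Complex.I)‖ = 2 * |Real.sin x| := by
  rw [norm_sub_rev, mul_comm, ← Complex.ofReal_ofNat, ← Complex.ofReal_mul,
    Complex.norm_exp_I_mul_ofReal_sub_one, mul_div_cancel_left₀ x two_ne_zero, norm_mul,
    Real.norm_ofNat, Real.norm_eq_abs]

lemma prod_two_mul_abs_sin (n j : ℕ) (hj : j.Coprime (n + 1)) :
    ∏ k ∈ Icc 1 n, 2 * |sin (j * k * π / (n + 1))| = n + 1 := by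
  have hζ := Complex.isPrimitiveRoot_exp_of_coprime j (n + 1) n.succ_ne_zero hj
  have hpow (k : ℕ) : Complex.exp (2 * π * Complex.I * (j / (n + 1 : ℕ))) ^ k =
      Complex.exp (2 * (j * k * π / (n + 1) : ℝ) * Complex.I) := by
    rw [← Complex.exp_nat_mul]
    congr 1
    push_cast
    ring
  have hnorm := congrArg norm hζ.prod_one_sub_pow_eq_order
  simp only [norm_prod, hpow, Complex.norm_one_sub_exp_two_mul_I] at hnorm
  rw [prod_Icc_one_eq_prod_range]
  push_cast at hnorm ⊢
  rw [hnorm]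
  exact_mod_cast Complex.norm_natCast (n + 1)

lemma prod_two_mul_abs_cos (n : ℕ) (hn : Even n) :
    ∏ k ∈ Icc 1 n, 2 * |cos (k * π / (n + 1))| = 1 := by
  have hsin := prod_two_mul_abs_sin n 1 (Nat.coprime_one_left _)
  have hsin_two := prod_two_mul_abs_sin n 2 (Nat.coprime_two_left.mpr hn.add_one)
  have hdouble (k : ℕ) : 2 * |sin ((2 : ℕ) * k * π / (n + 1))| =
      2 * |sin ((1 : ℕ) * k * π / (n + 1))| * (2 * |cos (k * π / (n + 1))|) := by
    rw [Nat.cast_one, one_mul, Nat.cast_two, mul_assoc, mul_div_assoc, mul_div_assoc, sin_two_mul,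
      abs_mul, abs_mul, abs_two]
    ring
  rw [prod_congr rfl fun k _ ↦ hdouble k, prod_mul_distrib, hsin] at hsin_two
  exact mul_left_cancel₀ (by positivity) (hsin_two.trans (mul_one _).symm)

section HalfProducts

variable (N : ℕ)

lemma cast_sub_mul_pi_div_two_mul_add_one {n : ℕ} (hn : n ≤ 2 * N + 1) :
    ((2 * N + 1 - n : ℕ) : ℝ) * π / (2 * N + 1) = π - n * π / (2 * N + 1) := by
  rw [Nat.cast_sub hn]
  push_cast
  field_simp

lemma mul_pi_div_two_mul_add_one_mem_Ioo {n : ℕ} (hn : n ∈ Icc 1 N) :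
    n * π / (2 * N + 1) ∈ Set.Ioo 0 (π / 2) := by
  obtain ⟨hn_pos, hn_le⟩ := mem_Icc.mp hn
  have hn_pos : (0 : ℝ) < n := by exact_mod_cast hn_pos
  have hn_le : (n : ℝ) ≤ N := by exact_mod_cast hn_le
  refine ⟨by positivity, ?_⟩
  rw [div_lt_div_iff₀ (by positivity) two_pos]
  nlinarith [pi_pos]

lemma prod_two_mul_sin_half :
    ∏ n ∈ Icc 1 N, 2 * sin (n * π / (2 * N + 1)) = √(2 * N + 1) := by
  have hfull := prod_two_mul_abs_sin (2 * N) 1 (Nat.coprime_one_left _)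
  push_cast at hfull
  simp only [one_mul] at hfull
  rw [prod_Icc_two_mul_eq_sq_of_symm _ N fun n hn ↦ ?_] at hfull
  · calc ∏ n ∈ Icc 1 N, 2 * sin (n * π / (2 * N + 1))
        = ∏ n ∈ Icc 1 N, 2 * |sin (n * π / (2 * N + 1))| := prod_congr rfl fun n hn ↦ by
          have ⟨hpos, hlt⟩ := mul_pi_div_two_mul_add_one_mem_Ioo N hn
          rw [abs_of_pos (sin_pos_of_pos_of_lt_pi hpos (by linarith))]
      _ = √(2 * N + 1) := by rw [← sqrt_sq (prod_nonneg fun n _ ↦ by positivity), hfull]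
  · rw [cast_sub_mul_pi_div_two_mul_add_one N (by rw [mem_Icc] at hn; omega), sin_pi_sub]

lemma prod_two_mul_cos_half :
    ∏ n ∈ Icc 1 N, 2 * cos (n * π / (2 * N + 1)) = 1 := by
  have hfull := prod_two_mul_abs_cos (2 * N) (even_two_mul N)
  push_cast at hfull
  rw [prod_Icc_two_mul_eq_sq_of_symm _ N fun n hn ↦ ?_] at hfull
  · calc ∏ n ∈ Icc 1 N, 2 * cos (n * π / (2 * N + 1))
        = ∏ n ∈ Icc 1 N, 2 * |cos (n * π / (2 * N + 1))| := prod_congr rfl fun n hn ↦ by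
          rw [abs_of_pos (cos_pos_of_mem_Ioo (Set.Ioo_subset_Ioo_left (by linarith [pi_pos])
            (mul_pi_div_two_mul_add_one_mem_Ioo N hn)))]
      _ = 1 := by rw [← sqrt_sq (prod_nonneg fun n _ ↦ by positivity), hfull, sqrt_one]
  · rw [cast_sub_mul_pi_div_two_mul_add_one N (by rw [mem_Icc] at hn; omega), cos_pi_sub, abs_neg]

end HalfProducts

theorem stmt0_general (N : ℕ) :
    ∏ n ∈ Finset.Icc 1 N, Real.tan (n * Real.pi / (2 * N + 1)) =
      Real.sqrt (2 * N + 1) := by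
  calc ∏ n ∈ Icc 1 N, tan (n * π / (2 * N + 1))
      = ∏ n ∈ Icc 1 N, 2 * sin (n * π / (2 * N + 1)) / (2 * cos (n * π / (2 * N + 1))) :=
        prod_congr rfl fun n _ ↦ by rw [tan_eq_sin_div_cos, mul_div_mul_left _ _ two_ne_zero]
    _ = √(2 * N + 1) := by
        rw [prod_div_distrib, prod_two_mul_sin_half, prod_two_mul_cos_half, div_one]

theorem stmt0 (N : ℕ) (hN : 0 < N) :
    ∏ n ∈ Finset.Icc 1 N, Real.tan (n * Real.pi / (2 * N + 1)) =
      Real.sqrt (2 * N + 1) :=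
  stmt0_general N
end

section
/- For every positive integer N, the product over n = 1 to N of cot²(nπ/(2N+1)) equals 1/(2N+1). -/
/-!
With ζ = exp(2πi/m) and m = 2N + 1, the product of the numbers 1 - ζ^k (1 ≤ k < m) is m, while
evaluating X^m - 1 = ∏ (X - ζ^k) at -1 gives that the product of the numbers 1 + ζ^k is 1. Taking
absolute values, ∏ |2 sin(kπ/m)| = m and ∏ |2 cos(kπ/m)| = 1, so
∏_{k=1}^{2N} |cot(kπ/m)| = 1/m. Since |cot(kπ/m)| is invariant under k ↦ m - k, this product is the
square of ∏_{k=1}^{N} |cot(kπ/m)|.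
-/

open Finset Polynomial Real

namespace IsPrimitiveRoot

variable {R : Type*} [CommRing R] [IsDomain R] {n : ℕ} {μ : R}

lemma two_mul_prod_one_add_pow_eq_two (hμ : IsPrimitiveRoot μ (2 * n + 1)) :
    2 * ∏ k ∈ range (2 * n), (1 + μ ^ (k + 1)) = 2 := by
  have h := congrArg (eval (-1)) (X_pow_sub_C_eq_prod hμ (Nat.succ_pos _) (one_pow _))
  simp only [eval_sub, eval_pow, eval_X, eval_C, eval_prod, mul_one] at h
  have hneg : ∀ i ∈ range (2 * n + 1), -1 - μ ^ i = -(1 + μ ^ i) := fun _ _ => by ring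
  rw [prod_congr rfl hneg, prod_neg, card_range, prod_range_succ', pow_zero,
    Odd.neg_one_pow (odd_two_mul_add_one n)] at h
  linear_combination h

lemma prod_one_add_pow_eq_one (hμ : IsPrimitiveRoot μ (2 * n + 1)) :
    ∏ k ∈ range (2 * n), (1 + μ ^ (k + 1)) = 1 := by
  by_cases h2 : (2 : R) = 0
  · have hsub : ∀ k ∈ range (2 * n), 1 + μ ^ (k + 1) = 1 - μ ^ (k + 1) := fun k _ => by
      linear_combination μ ^ (k + 1) * h2
    rw [prod_congr rfl hsub, hμ.prod_one_sub_pow_eq_order]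
    push_cast
    linear_combination n * h2
  · exact mul_left_cancel₀ h2 (hμ.two_mul_prod_one_add_pow_eq_two.trans (mul_one 2).symm)

end IsPrimitiveRoot

lemma Complex.norm_one_sub_exp_mul_I (x : ℝ) :
    ‖1 - Complex.exp (x * Complex.I)‖ = |2 * Real.sin (x / 2)| := by
  rw [norm_sub_rev, mul_comm, Complex.norm_exp_I_mul_ofReal_sub_one, Real.norm_eq_abs]

lemma Complex.norm_one_add_exp_mul_I (x : ℝ) :
    ‖1 + Complex.exp (x * Complex.I)‖ = |2 * Real.cos (x / 2)| := by
  have h : Complex.exp (x * Complex.I) = -Complex.exp ((x + Real.pi : ℝ) * Complex.I) := by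
    push_cast
    rw [add_mul, Complex.exp_add, Complex.exp_pi_mul_I]
    ring
  rw [h, ← sub_eq_add_neg, norm_one_sub_exp_mul_I, add_div, Real.sin_add_pi_div_two]

lemma prod_abs_two_sin (n : ℕ) :
    ∏ k ∈ range n, |2 * sin ((k + 1) * π / (n + 1))| = n + 1 := by
  have hμ := Complex.isPrimitiveRoot_exp (n + 1) n.succ_ne_zero
  have h := congrArg norm hμ.prod_one_sub_pow_eq_order
  rw [norm_prod] at h
  convert h using 2 with k
  · rw [← Complex.exp_nat_mul, show ((k + 1 : ℕ) : ℂ) * (2 * π * Complex.I / (n + 1 : ℕ))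
        = ((2 * ((k + 1) * π / (n + 1)) : ℝ) : ℂ) * Complex.I by push_cast; ring,
      Complex.norm_one_sub_exp_mul_I, mul_div_cancel_left₀ _ two_ne_zero]
  · norm_cast

lemma prod_abs_two_cos (n : ℕ) :
    ∏ k ∈ range (2 * n), |2 * cos ((k + 1) * π / (2 * n + 1))| = 1 := by
  have hμ := Complex.isPrimitiveRoot_exp (2 * n + 1) (2 * n).succ_ne_zero
  have h := congrArg norm hμ.prod_one_add_pow_eq_one
  rw [norm_prod, norm_one] at h
  convert h using 2 with k
  rw [← Complex.exp_nat_mul, show ((k + 1 : ℕ) : ℂ) * (2 * π * Complex.I / (2 * n + 1 : ℕ))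
      = ((2 * ((k + 1) * π / (2 * n + 1))) : ℝ) * Complex.I by push_cast; ring,
    Complex.norm_one_add_exp_mul_I, mul_div_cancel_left₀ _ two_ne_zero]

lemma prod_abs_cot (n : ℕ) :
    ∏ k ∈ range (2 * n), |cot ((k + 1) * π / (2 * n + 1))| = 1 / (2 * n + 1) := by
  have hcot : ∀ x : ℝ, |cot x| = |2 * cos x| / |2 * sin x| := fun x => by
    rw [cot_eq_cos_div_sin, ← abs_div, mul_div_mul_left _ _ two_ne_zero]
  simp only [hcot]
  have hsin := prod_abs_two_sin (2 * n)
  push_cast at hsin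
  rw [prod_div_distrib, prod_abs_two_cos, hsin]

lemma Finset.prod_range_two_mul_eq_sq {M : Type*} [CommMonoid M] {f : ℕ → M} {n : ℕ}
    (h : ∀ k < n, f (2 * n - 1 - k) = f k) :
    ∏ k ∈ range (2 * n), f k = (∏ k ∈ range n, f k) ^ 2 := by
  rw [two_mul, prod_range_add, sq, ← prod_range_reflect (fun k => f (n + k))]
  refine congrArg _ (prod_congr rfl fun k hk => ?_)
  rw [mem_range] at hk
  rw [← h k hk]
  congr 1
  omega

lemma abs_cot_reflect (n k : ℕ) (hk : k < 2 * n) :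
    |cot (((2 * n - 1 - k : ℕ) + 1) * π / (2 * n + 1))|
      = |cot ((k + 1) * π / (2 * n + 1))| := by
  have hm : (2 * n + 1 : ℝ) ≠ 0 := by positivity
  rw [show (((2 * n - 1 - k : ℕ) : ℝ) + 1) * π / (2 * n + 1)
      = π - (k + 1) * π / (2 * n + 1) by
        rw [Nat.cast_sub (by omega), Nat.cast_sub (by omega)]; field_simp; push_cast; ring,
    cot_eq_cos_div_sin, cot_eq_cos_div_sin, cos_pi_sub, sin_pi_sub, neg_div,
    abs_neg]

theorem stmt1_general (N : ℕ) :
    ∏ n ∈ Finset.Icc 1 N, (Real.cot (n * Real.pi / (2 * N + 1)))^2 =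
      1 / (2 * N + 1) := by
  have hshift := prod_Ico_add' (fun n : ℕ => |Real.cot (n * Real.pi / (2 * N + 1))| ^ 2) 0 N 1
  rw [← range_eq_Ico, zero_add, Ico_add_one_right_eq_Icc] at hshift
  simp only [← sq_abs (Real.cot _)]
  rw [← hshift, prod_pow]
  push_cast
  rw [← prod_range_two_mul_eq_sq (fun k hk => abs_cot_reflect N k (by omega)), prod_abs_cot]

theorem stmt1 (N : ℕ) (hN : 0 < N) :
    ∏ n ∈ Finset.Icc 1 N, (Real.cot (n * Real.pi / (2 * N + 1)))^2 =
      1 / (2 * N + 1) :=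
  stmt1_general N
end

section
/- The improper integral ∫₀^{1/2} ln(tan(πx)) dx equals 0. -/
open Real

/- Reflecting `[0, 1/2]` about its midpoint turns `tan (π x)` into `cot (π x)`, so the integrand is
antisymmetric under `x ↦ 1/2 - x` and its integral equals its own negative. Since Lean's `tan` and
`log` take the value `0` at the singular points, the reflection identity holds at every point, and the
argument needs no integrability. -/

theorem intervalIntegral.integral_eq_zero_of_comp_add_sub_eq_neg {E : Type*} [NormedAddCommGroup E]
    [NormedSpace ℝ E] {f : ℝ → E} {a b : ℝ} (hf : ∀ x, f (a + b - x) = -f x) :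
    ∫ x in a..b, f x = 0 := by
  have hreflect := intervalIntegral.integral_comp_sub_left f (a + b) (a := a) (b := b)
  simp only [hf, intervalIntegral.integral_neg, add_sub_cancel_right, add_sub_cancel_left] at hreflect
  have htwice : (2 : ℝ) • ∫ x in a..b, f x = 0 := by
    rw [two_smul]
    nth_rw 1 [← hreflect]
    exact neg_add_cancel _
  simpa using htwice

theorem Real.log_tan_pi_div_two_sub (x : ℝ) : log (tan (π / 2 - x)) = -log (tan x) := by
  rw [tan_pi_div_two_sub, log_inv]

theorem stmt12 : ∫ x in (0:ℝ)..(1/2), Real.log (Real.tan (Real.pi * x)) = 0 := by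
  refine intervalIntegral.integral_eq_zero_of_comp_add_sub_eq_neg fun x => ?_
  rw [← log_tan_pi_div_two_sub]
  ring_nf
end
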